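/- For n-variate real homogeneous polynomials f = Σ_{|α|=d} b_α x^α and g = Σ_{|α|=d} c_α x^α of degree d, the Weyl–Bombieri inner product ⟨f,g⟩_W := Σ_{|α|=d} b_α c_α / binom(d,α) is invariant under orthogonal changes of variables: for any U ∈ O(n), ⟨f∘U, g∘U⟩_W = ⟨f,g⟩_W. -/

import Mathlib

open MvPolynomial

/-- The Weyl–Bombieri inner product of two polynomials:
`⟨f,g⟩_W = Σ_α f_α g_α / binom(d,α)` (the sum may be taken over the union of supports). -/
noncomputable def weylInner {n : ℕ} (f g : MvPolynomial (Fin n) ℝ) : ℝ :=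
  ∑ α ∈ f.support ∪ g.support,
    (f.coeff α * g.coeff α) / (Nat.multinomial Finset.univ α : ℝ)

/-- Precomposition of a polynomial with the linear map given by a matrix `U`:
`(f ∘ U)(x) = f (U x)`. -/
noncomputable def compMatrix {n : ℕ} (f : MvPolynomial (Fin n) ℝ)
    (U : Matrix (Fin n) (Fin n) ℝ) : MvPolynomial (Fin n) ℝ :=
  MvPolynomial.aeval (fun i => ∑ j, Matrix.of U i j • (X j : MvPolynomial (Fin n) ℝ)) f

/-!
For forms of degree `d`, `d! ⟨f, g⟩_W` is the Fischer pairing `[f, g] = Σ_α α! f_α g_α`, i.e. the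
constant term of `f(∂) g`. In this pairing multiplication by `x_i` is adjoint to `∂_i`. Under the
substitution `x ↦ U x` the variables transform by `U` and, by the chain rule, the partial
derivatives by `Uᵀ`; orthogonality `U Uᵀ = 1` makes these cancel, so `[f ∘ U, g ∘ U] = [f, g]`
follows by induction on `f`.
-/

open scoped Nat Matrix

namespace MvPolynomial

variable {σ R : Type*} [Fintype σ] [CommRing R]

noncomputable def fischerPairing : MvPolynomial σ R →ₗ[R] MvPolynomial σ R →ₗ[R] R :=
  (basisMonomials σ R).constr R fun α => (∏ i, ((α i)! : R)) • lcoeff R α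

theorem fischerPairing_monomial (α : σ →₀ ℕ) (a : R) (g : MvPolynomial σ R) :
    fischerPairing (monomial α a) g = a * (∏ i, ((α i)! : R)) * g.coeff α := by
  have : monomial α a = a • basisMonomials σ R α := by simp [smul_monomial]
  rw [fischerPairing, this, map_smul, Module.Basis.constr_basis]
  simp [mul_assoc]

theorem fischerPairing_eq_sum {s : Finset (σ →₀ ℕ)} {f : MvPolynomial σ R} (hs : f.support ⊆ s)
    (g : MvPolynomial σ R) :
    fischerPairing f g = ∑ α ∈ s, f.coeff α * (∏ i, ((α i)! : R)) * g.coeff α := by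
  conv_lhs => rw [← support_sum_monomial_coeff f]
  rw [map_sum, LinearMap.sum_apply]
  simp only [fischerPairing_monomial]
  exact Finset.sum_subset hs fun α _ hα => by simp [notMem_support_iff.mp hα]

theorem fischerPairing_C (a : R) (g : MvPolynomial σ R) :
    fischerPairing (C a) g = a * constantCoeff g := by
  simp [← monomial_zero', fischerPairing_monomial, constantCoeff_eq]

theorem fischerPairing_mul_X (f g : MvPolynomial σ R) (i : σ) :
    fischerPairing (f * X i) g = fischerPairing f (pderiv i g) := by
  classical
  induction f using MvPolynomial.induction_on' with
  | monomial β a =>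
    rw [X, monomial_mul, mul_one, fischerPairing_monomial, fischerPairing_monomial,
      coeff_pderiv]
    have hfac (j : σ) : (((β + Finsupp.single i 1 : σ →₀ ℕ) j)! : R)
        = (β j)! * if j = i then (β i + 1 : R) else 1 := by
      rcases eq_or_ne j i with rfl | hj
      · simp [Nat.factorial_succ, mul_comm]
      · simp [Finsupp.single_eq_of_ne hj, hj]
    simp only [hfac, Finset.prod_mul_distrib, Finset.prod_ite_eq', Finset.mem_univ, if_true]
    ring
  | add p q hp hq => simp only [add_mul, map_add, LinearMap.add_apply, hp, hq]

noncomputable def matrixSubst (U : Matrix σ σ R) : MvPolynomial σ R →ₐ[R] MvPolynomial σ R :=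
  aeval fun i => ∑ j, U i j • X j

theorem matrixSubst_X (U : Matrix σ σ R) (i : σ) :
    matrixSubst U (X i) = ∑ j, U i j • X j :=
  aeval_X _ i

theorem constantCoeff_matrixSubst (U : Matrix σ σ R) (g : MvPolynomial σ R) :
    constantCoeff (matrixSubst U g) = constantCoeff g := by
  induction g using MvPolynomial.induction_on with
  | C a => simp [matrixSubst]
  | add p q hp hq => simp only [map_add, hp, hq]
  | mul_X p i hp => simp [matrixSubst_X]

theorem IsHomogeneous.matrixSubst {d : ℕ} {f : MvPolynomial σ R} (hf : f.IsHomogeneous d)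
    (U : Matrix σ σ R) : (matrixSubst U f).IsHomogeneous d := by
  have hlin (i : σ) : (∑ j, U i j • X j : MvPolynomial σ R).IsHomogeneous 1 :=
    IsHomogeneous.sum _ _ _ fun j _ => by
      rw [smul_eq_C_mul]
      exact (isHomogeneous_X R j).C_mul _
  have h := hf.aeval _ hlin
  rwa [one_mul] at h

theorem pderiv_matrixSubst_X (U : Matrix σ σ R) (i j : σ) :
    pderiv j (matrixSubst U (X i)) = C (U i j) := by
  classical
  simp [matrixSubst_X, pderiv_X, Pi.single_apply, smul_eq_C_mul]

theorem pderiv_matrixSubst (U : Matrix σ σ R) (j : σ) (g : MvPolynomial σ R) :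
    pderiv j (matrixSubst U g) = ∑ k, U k j • matrixSubst U (pderiv k g) := by
  classical
  induction g using MvPolynomial.induction_on with
  | C a => simp [matrixSubst]
  | add p q hp hq => simp only [map_add, hp, hq, smul_add, Finset.sum_add_distrib]
  | mul_X p i hp =>
    simp only [map_mul, pderiv_mul, hp, pderiv_matrixSubst_X, map_add, smul_add,
      Finset.sum_add_distrib, Finset.sum_mul, smul_mul_assoc, pderiv_X, Pi.single_apply]
    congr 1
    simp [smul_eq_C_mul, mul_comm]

theorem fischerPairing_matrixSubst [DecidableEq σ] {U : Matrix σ σ R} (hU : U * Uᵀ = 1)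
    (f g : MvPolynomial σ R) :
    fischerPairing (matrixSubst U f) (matrixSubst U g) = fischerPairing f g := by
  have horth (i k : σ) : ∑ l, U i l * U k l = if i = k then 1 else 0 := by
    simpa [Matrix.mul_apply, Matrix.one_apply] using congrFun (congrFun hU i) k
  induction f using MvPolynomial.induction_on generalizing g with
  | C a =>
    rw [show matrixSubst U (C a) = C a from aeval_C _ a, fischerPairing_C, fischerPairing_C,
      constantCoeff_matrixSubst]
  | add p q hp hq => simp only [map_add, LinearMap.add_apply, hp, hq]
  | mul_X p i hp =>
    calc fischerPairing (matrixSubst U (p * X i)) (matrixSubst U g)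
        = ∑ l, U i l * fischerPairing (matrixSubst U p) (pderiv l (matrixSubst U g)) := by
          simp [matrixSubst_X, Finset.mul_sum, fischerPairing_mul_X]
      _ = ∑ k, (∑ l, U i l * U k l) *
            fischerPairing (matrixSubst U p) (matrixSubst U (pderiv k g)) := by
          simp only [pderiv_matrixSubst, map_sum, map_smul, smul_eq_mul, Finset.mul_sum,
            Finset.sum_mul, mul_assoc]
          exact Finset.sum_comm
      _ = fischerPairing (p * X i) g := by
          simp [horth, hp, fischerPairing_mul_X]

end MvPolynomial

theorem weylInner_eq_fischerPairing_div {n d : ℕ} {f : MvPolynomial (Fin n) ℝ}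
    (hf : f.IsHomogeneous d) (g : MvPolynomial (Fin n) ℝ) :
    weylInner f g = fischerPairing f g / d ! := by
  rw [weylInner, fischerPairing_eq_sum Finset.subset_union_left, Finset.sum_div]
  refine Finset.sum_congr rfl fun α _ => ?_
  by_cases hα : f.coeff α = 0
  · simp [hα]
  have hspec : (∏ i, ((α i)! : ℝ)) * Nat.multinomial Finset.univ α = d ! := by
    have hdeg : ∑ i, α i = d := by
      rw [← Finsupp.degree_eq_sum, Finsupp.degree_apply,
        hf.degree_eq_sum_deg_support (mem_support_iff.mpr hα)]
    exact_mod_cast hdeg ▸ Nat.multinomial_spec _ _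
  rw [← hspec]
  have : (∏ i, ((α i)! : ℝ)) ≠ 0 := by positivity
  field_simp

theorem weylInner_comp_orthogonal_general {n d : ℕ} (f g : MvPolynomial (Fin n) ℝ)
    (hf : f.IsHomogeneous d)
    (U : Matrix (Fin n) (Fin n) ℝ) (hU : U ∈ Matrix.orthogonalGroup (Fin n) ℝ) :
    weylInner (compMatrix f U) (compMatrix g U) = weylInner f g := by
  have hUUt : U * Uᵀ = 1 := by
    simpa [Matrix.star_eq_conjTranspose] using (Matrix.mem_orthogonalGroup_iff (Fin n) ℝ).mp hU
  change weylInner (matrixSubst U f) (matrixSubst U g) = _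
  rw [weylInner_eq_fischerPairing_div (hf.matrixSubst U), weylInner_eq_fischerPairing_div hf,
    fischerPairing_matrixSubst hUUt]

/-- the Weyl–Bombieri inner product of homogeneous degree-`d` polynomials is
invariant under orthogonal changes of variables. -/
theorem weylInner_comp_orthogonal {n d : ℕ} (f g : MvPolynomial (Fin n) ℝ)
    (hf : f.IsHomogeneous d) (hg : g.IsHomogeneous d)
    (U : Matrix (Fin n) (Fin n) ℝ) (hU : U ∈ Matrix.orthogonalGroup (Fin n) ℝ) :
    weylInner (compMatrix f U) (compMatrix g U) = weylInner f g :=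
  weylInner_comp_orthogonal_general f g hf U hU
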